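/- For a linear system ẋ = Ax with observation s = Cx (C : ℝⁿ → ℝ a linear functional), the system is observable — i.e., the map x₀ ↦ (t ↦ C e^{tA} x₀) is injective — if and only if the observability matrix O = [C; CA; CA²; ...; CA^{n−1}] has rank n (equivalently, ⋂_{j=0}^{n−1} ker(C A^j) = {0}). -/

import Mathlib

/-!
By Cayley–Hamilton every power `A ^ k` is a linear combination of `A ^ j`, `j < n`, so
`⋂_{j<n} ker (C A^j) = ⋂_k ker (C A^k)`. On the other hand `t ↦ C (e^{tA} y)` vanishes
identically iff all its derivatives `C (A^k y)` at `0` vanish: one direction by expanding the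
exponential series, the other by differentiating repeatedly. Hence the kernel of the linear map
`y ↦ (t ↦ C (e^{tA} y))` is the joint kernel of the observability matrix, and observability is
injectivity of that map.
-/

open NormedSpace

-- Matrices carry no global norm; any norm induces the product topology in which `exp` is taken.
attribute [local instance] Matrix.linftyOpNormedAddCommGroup Matrix.linftyOpNormedRing
  Matrix.linftyOpNormedAlgebra

open Polynomial in
theorem Matrix.pow_mem_span_pow_lt {R : Type*} [CommRing R] [Nontrivial R] {n : ℕ}
    (A : Matrix (Fin n) (Fin n) R) (k : ℕ) :
    A ^ k ∈ Submodule.span R (Set.range fun j : Fin n => A ^ (j : ℕ)) := by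
  rcases n.eq_zero_or_pos with rfl | hn
  · exact Subsingleton.elim (0 : Matrix (Fin 0) (Fin 0) R) (A ^ k) ▸ zero_mem _
  have hdeg : (X ^ k %ₘ A.charpoly).natDegree < n := by
    have hne : A.charpoly ≠ 1 := fun h => by
      simpa [h, hn.ne] using A.charpoly_natDegree_eq_dim
    simpa [A.charpoly_natDegree_eq_dim] using natDegree_modByMonic_lt (X ^ k) A.charpoly_monic hne
  rw [A.pow_eq_aeval_mod_charpoly, aeval_eq_sum_range' hdeg]
  exact Submodule.sum_mem _ fun i hi =>
    Submodule.smul_mem _ _ (Submodule.subset_span ⟨⟨i, Finset.mem_range.mp hi⟩, rfl⟩)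

theorem Matrix.forall_map_pow_eq_zero_iff {R M : Type*} [CommRing R] [Nontrivial R]
    [AddCommGroup M] [Module R M] {n : ℕ} (A : Matrix (Fin n) (Fin n) R)
    (L : Matrix (Fin n) (Fin n) R →ₗ[R] M) :
    (∀ k : ℕ, L (A ^ k) = 0) ↔ ∀ j : Fin n, L (A ^ (j : ℕ)) = 0 := by
  refine ⟨fun h j => h j, fun h k => ?_⟩
  have hspan : Submodule.span R (Set.range fun j : Fin n => A ^ (j : ℕ)) ≤ LinearMap.ker L :=
    Submodule.span_le.mpr (Set.range_subset_iff.mpr h)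
  exact hspan (A.pow_mem_span_pow_lt k)

section Exponential

variable {𝕂 𝔸 E : Type*} [RCLike 𝕂] [NormedRing 𝔸] [NormedAlgebra 𝕂 𝔸] [CompleteSpace 𝔸]
  [NormedAddCommGroup E] [NormedSpace 𝕂 E]

theorem map_exp_smul_mul_pow_eq_zero {L : 𝔸 →L[𝕂] E} {a : 𝔸}
    (h : ∀ t : 𝕂, L (exp (t • a)) = 0) (k : ℕ) (t : 𝕂) :
    L (exp (t • a) * a ^ k) = 0 := by
  induction k generalizing t with
  | zero => simpa using h t
  | succ k ih =>
    have hderiv : HasDerivAt (fun u : 𝕂 => L (exp (u • a) * a ^ k))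
        (L (exp (t • a) * a * a ^ k)) t :=
      L.hasFDerivAt.comp_hasDerivAt t ((hasDerivAt_exp_smul_const a t).mul_const _)
    rw [show (fun u : 𝕂 => L (exp (u • a) * a ^ k)) = fun _ => 0 from funext ih,
      mul_assoc, ← pow_succ'] at hderiv
    exact hderiv.unique (hasDerivAt_const t 0)

theorem forall_map_exp_smul_eq_zero_iff (L : 𝔸 →L[𝕂] E) (a : 𝔸) :
    (∀ t : 𝕂, L (exp (t • a)) = 0) ↔ ∀ k : ℕ, L (a ^ k) = 0 := by
  refine ⟨fun h k => by simpa using map_exp_smul_mul_pow_eq_zero h k 0, fun h t => ?_⟩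
  rw [exp_eq_tsum 𝕂, L.map_tsum (expSeries_summable' (t • a))]
  simp [_root_.smul_pow, h]

end Exponential

noncomputable def outputMap {n : ℕ} (A : Matrix (Fin n) (Fin n) ℝ) (C : (Fin n → ℝ) →ₗ[ℝ] ℝ) :
    (Fin n → ℝ) →ₗ[ℝ] ℝ → ℝ :=
  LinearMap.pi fun t => C ∘ₗ (exp (t • A)).mulVecLin

theorem ker_outputMap {n : ℕ} (A : Matrix (Fin n) (Fin n) ℝ) (C : (Fin n → ℝ) →ₗ[ℝ] ℝ) :
    LinearMap.ker (outputMap A C) = ⨅ j : Fin n, LinearMap.ker (C ∘ₗ (A ^ (j : ℕ)).mulVecLin) := by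
  ext y
  let L : Matrix (Fin n) (Fin n) ℝ →L[ℝ] ℝ :=
    (C ∘ₗ LinearMap.applyₗ y ∘ₗ Matrix.toLin'.toLinearMap).toContinuousLinearMap
  simp only [outputMap, LinearMap.mem_ker, funext_iff, LinearMap.pi_apply, Pi.zero_apply,
    Submodule.mem_iInf, LinearMap.comp_apply, Matrix.mulVecLin_apply]
  exact (forall_map_exp_smul_eq_zero_iff L A).trans (A.forall_map_pow_eq_zero_iff L.toLinearMap)

/-- For the linear system `ẋ = Ax` with observation `s = Cx`, the system
is observable — the map `x₀ ↦ (t ↦ C e^{tA} x₀)` is injective — if and only if the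
observability matrix `[C; CA; …; CA^{n−1}]` has rank `n`, equivalently
`⋂_{j<n} ker (C ∘ A^j) = {0}`. -/
theorem stmt_19 {n : ℕ} (A : Matrix (Fin n) (Fin n) ℝ)
    (C : (Fin n → ℝ) →ₗ[ℝ] ℝ) :
    (∀ x₀ x₁ : Fin n → ℝ,
        (∀ t : ℝ, C ((NormedSpace.exp (t • A)).mulVec x₀) =
          C ((NormedSpace.exp (t • A)).mulVec x₁)) → x₀ = x₁) ↔
      (⨅ j : Fin n, LinearMap.ker (C ∘ₗ (A ^ (j : ℕ)).mulVecLin)) = ⊥ := by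
  rw [← ker_outputMap, LinearMap.ker_eq_bot]
  simp only [Function.Injective, outputMap, funext_iff, LinearMap.pi_apply, LinearMap.comp_apply,
    Matrix.mulVecLin_apply]
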